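/- Let G = ⟨a, b | a²b⁻²ab⁻²a²ba²baba²b = 1⟩ with a left-ordering ≺, and set μ = b⁻²ab⁻²ab⁻¹, λ = a⁻²b⁻¹a⁻²b. If 1 ≺ a and 1 ≺ b, then 1 ≺ μ⁻¹λ. -/

import Mathlib

/-- The single relator `a²b⁻²ab⁻²a²ba²baba²b` of the presentation of `π₁(v2503)`,
with `a`, `b` the generators of the free group on two letters. -/
def rel2503 : FreeGroup (Fin 2) :=
  let a : FreeGroup (Fin 2) := FreeGroup.of 0
  let b : FreeGroup (Fin 2) := FreeGroup.of 1
  a ^ 2 * b⁻¹ ^ 2 * a * b⁻¹ ^ 2 * a ^ 2 * b * a ^ 2 * b * a * b * a ^ 2 * b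

/-- The fundamental group of `v2503`: `⟨a, b | a²b⁻²ab⁻²a²ba²baba²b = 1⟩`. -/
abbrev G2503 : Type := PresentedGroup ({rel2503} : Set (FreeGroup (Fin 2)))

/-- The generator `a`. -/
def ga : G2503 := PresentedGroup.of 0
/-- The generator `b`. -/
def gb : G2503 := PresentedGroup.of 1

/-- `x = b⁻²a`. -/
def gx : G2503 := gb⁻¹ ^ 2 * ga
/-- `y = ba²`. -/
def gy : G2503 := gb * ga ^ 2
/-- The homological meridian `μ = b⁻²ab⁻²ab⁻¹`. -/
def gmu : G2503 := gb⁻¹ ^ 2 * ga * gb⁻¹ ^ 2 * ga * gb⁻¹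
/-- The homological longitude `λ = a⁻²b⁻¹a⁻²b`. -/
def glam : G2503 := ga⁻¹ ^ 2 * gb⁻¹ * ga⁻¹ ^ 2 * gb

/-! For a left-ordering with `1 < a` and `1 < b`, write the relator as `a²x²aba²baba²b`. If
`1 ≤ x`, every factor is `≥ 1` and `a² > 1`, so the relator would be `> 1`; hence `x < 1`.
Modulo the relator `μ⁻¹λ = b a y² x⁻¹`, a product of elements `≥ 1` starting with `b > 1`. -/

theorem relator_eq_one :
    ga ^ 2 * gx ^ 2 * ga * gb * ga ^ 2 * gb * ga * gb * ga ^ 2 * gb = 1 := by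
  have h : ga ^ 2 * gb⁻¹ ^ 2 * ga * gb⁻¹ ^ 2 * ga ^ 2 * gb * ga ^ 2 * gb * ga * gb * ga ^ 2 * gb
      = 1 := PresentedGroup.one_of_mem rfl
  rw [← h]
  simp only [gx, sq, mul_assoc]

theorem gmu_inv_mul_glam : gmu⁻¹ * glam = gb * ga * gy ^ 2 * gx⁻¹ := by
  -- `μ⁻¹λ (b a y² x⁻¹)⁻¹` is the conjugate of the inverse relator by `w`.
  set w := gb * ga * gb * ga ^ 2 * gb * ga * gb * ga ^ 2 * gb
  have h : gmu⁻¹ * glam = w *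
      (ga ^ 2 * gx ^ 2 * ga * gb * ga ^ 2 * gb * ga * gb * ga ^ 2 * gb)⁻¹ * w⁻¹ *
      (gb * ga * gy ^ 2 * gx⁻¹) := by
    simp only [w, gmu, glam, gx, gy, pow_two]
    group
  rw [h, relator_eq_one]
  group

section LeftOrdered

variable {H : Type*} [Group H] [LinearOrder H] [MulLeftStrictMono H] {a b x : H}

theorem lt_one_of_relator (ha : 1 < a) (hb : 1 ≤ b)
    (h : a ^ 2 * x ^ 2 * a * b * a ^ 2 * b * a * b * a ^ 2 * b = 1) : x < 1 := by
  have := mulLeftMono_of_mulLeftStrictMono H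
  by_contra! hx
  have ha2 : 1 ≤ a ^ 2 := one_le_pow_of_one_le' ha.le 2
  have hx2 : 1 ≤ x ^ 2 := one_le_pow_of_one_le' hx 2
  refine h.not_gt ?_
  repeat' first
    | assumption
    | exact ha.le
    | exact one_lt_pow' ha two_ne_zero
    | refine Left.one_lt_mul_of_lt_of_le ?_ ?_

end LeftOrdered

/-- Given a left-ordering of `π₁(v2503)`, if `1 ≺ a` and `1 ≺ b` then `1 ≺ μ⁻¹λ`. -/
theorem case_III_positive [LinearOrder G2503] [CovariantClass G2503 G2503 (· * ·) (· < ·)]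
    (ha : 1 < ga) (hb : 1 < gb) : 1 < gmu⁻¹ * glam := by
  have := mulLeftMono_of_mulLeftStrictMono G2503
  have hx : 1 < gx⁻¹ := Left.one_lt_inv_iff.2 (lt_one_of_relator ha hb.le relator_eq_one)
  have hy : 1 < gy := Left.one_lt_mul_of_lt_of_le hb (one_le_pow_of_one_le' ha.le 2)
  rw [gmu_inv_mul_glam]
  exact Left.one_lt_mul_of_lt_of_le (Left.one_lt_mul_of_lt_of_le
    (Left.one_lt_mul_of_lt_of_le hb ha.le) (one_le_pow_of_one_le' hy.le 2)) hx.le
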